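/- arXiv:0810.5148 — 6 statements merged into one kernel-verified Lean document; each statement's English description precedes it below -/
import Mathlib

section
/- Jensen's inequality for the matrix inverse under integration: if Σ : [0,T] → Sⁿ₊₊ is continuous with values in symmetric positive definite matrices, then ((1/T)∫₀ᵀ Σ(t) dt)⁻¹ ⪯ (1/T)∫₀ᵀ Σ(t)⁻¹ dt. -/
/-!
For positive definite `S`, completing the square gives `2 z ⬝ x - z ⬝ S z ≤ x ⬝ S⁻¹ x` for all `z`,
with equality at `z = S⁻¹ x`. The left side is affine in `S`, so averaging this inequality for
`S = Σ(t)` over `[0, T]` bounds it with `S` replaced by the mean `A` of `Σ`; choosing `z = A⁻¹ x`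
then yields `x ⬝ A⁻¹ x ≤ x ⬝ (mean of Σ⁻¹) x`.
-/

open Matrix MeasureTheory Set

namespace Matrix

variable {n : Type*} [Fintype n] [DecidableEq n]

theorem PosDef.two_mul_dotProduct_sub_le {S : Matrix n n ℝ} (hS : S.PosDef) (x z : n → ℝ) :
    2 * (z ⬝ᵥ x) - z ⬝ᵥ S *ᵥ z ≤ x ⬝ᵥ S⁻¹ *ᵥ x := by
  have hSS : S * S⁻¹ = 1 := S.mul_nonsing_inv (S.isUnit_iff_isUnit_det.mp hS.isUnit)
  have hST : Sᵀ = S := hS.isHermitian.eq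
  have hsq := hS.posSemidef.dotProduct_mulVec_nonneg (S⁻¹ *ᵥ x - z)
  have hcross : (S⁻¹ *ᵥ x) ⬝ᵥ S *ᵥ z = x ⬝ᵥ z := by
    rw [dotProduct_mulVec, ← mulVec_transpose, hST, mulVec_mulVec, hSS, one_mulVec]
  rw [star_trivial, mulVec_sub, mulVec_mulVec, hSS, one_mulVec, sub_dotProduct, dotProduct_sub,
    dotProduct_sub, dotProduct_comm _ x, hcross, dotProduct_comm x z] at hsq
  linarith

theorem posSemidef_sub_inv_of_forall_le {A B : Matrix n n ℝ} (hA : A.PosDef) (hB : B.IsHermitian)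
    (h : ∀ x z, 2 * (z ⬝ᵥ x) - z ⬝ᵥ A *ᵥ z ≤ x ⬝ᵥ B *ᵥ x) : (B - A⁻¹).PosSemidef := by
  refine .of_dotProduct_mulVec_nonneg (hB.sub hA.inv.isHermitian) fun x => ?_
  have hAz : A *ᵥ (A⁻¹ *ᵥ x) = x := by
    rw [mulVec_mulVec, A.mul_nonsing_inv (A.isUnit_iff_isUnit_det.mp hA.isUnit), one_mulVec]
  have := h x (A⁻¹ *ᵥ x)
  rw [hAz, dotProduct_comm _ x] at this
  rw [star_trivial, sub_mulVec, dotProduct_sub, sub_nonneg]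
  linarith

end Matrix

theorem ContinuousOn.matrix_inv {n 𝕜 X : Type*} [Fintype n] [DecidableEq n] [Field 𝕜]
    [TopologicalSpace 𝕜] [IsTopologicalDivisionRing 𝕜] [TopologicalSpace X]
    {A : X → Matrix n n 𝕜} {s : Set X} (hA : ContinuousOn A s) (hdet : ∀ x ∈ s, (A x).det ≠ 0) :
    ContinuousOn (fun x => (A x)⁻¹) s := fun x hx =>
  (continuousAt_matrix_inv _ (by
    simpa only [Ring.inverse_eq_inv'] using continuousAt_inv₀ (hdet x hx))).comp_continuousWithinAt
    (hA x hx)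

section IntervalIntegral

variable {n : Type*} [Fintype n] {a b : ℝ} {M : ℝ → Matrix n n ℝ}

theorem Matrix.dotProduct_mulVec_intervalIntegral
    (hM : ∀ i j, IntervalIntegrable (fun t => M t i j) volume a b) (x y : n → ℝ) :
    x ⬝ᵥ (of fun i j => ∫ t in a..b, M t i j) *ᵥ y = ∫ t in a..b, x ⬝ᵥ M t *ᵥ y := by
  have hterm : ∀ i j, IntervalIntegrable (fun t => x i * (M t i j * y j)) volume a b :=
    fun i j => ((hM i j).mul_const _).const_mul _
  have hrow : ∀ i, IntervalIntegrable (fun t => ∑ j, x i * (M t i j * y j)) volume a b :=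
    fun i => by simpa only [Finset.sum_fn] using IntervalIntegrable.sum _ fun j _ => hterm i j
  simp only [dotProduct, mulVec, of_apply, Finset.mul_sum]
  rw [intervalIntegral.integral_finsetSum fun i _ => hrow i]
  refine Finset.sum_congr rfl fun i _ => ?_
  rw [intervalIntegral.integral_finsetSum fun j _ => hterm i j]
  simp only [intervalIntegral.integral_const_mul, intervalIntegral.integral_mul_const]

theorem ContinuousOn.intervalIntegrable_dotProduct_mulVec (hab : a ≤ b)
    (hM : ContinuousOn M (Icc a b)) (x y : n → ℝ) :
    IntervalIntegrable (fun t => x ⬝ᵥ M t *ᵥ y) volume a b :=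
  ((continuous_const.dotProduct (continuous_id.matrix_mulVec continuous_const)).comp_continuousOn
    hM).intervalIntegrable_of_Icc hab

theorem ContinuousOn.dotProduct_mulVec_intervalIntegral (hab : a ≤ b)
    (hM : ContinuousOn M (Icc a b)) (x y : n → ℝ) :
    x ⬝ᵥ (of fun i j => ∫ t in a..b, M t i j) *ᵥ y = ∫ t in a..b, x ⬝ᵥ M t *ᵥ y :=
  Matrix.dotProduct_mulVec_intervalIntegral
    (fun i j => ((continuous_apply_apply i j).comp_continuousOn hM).intervalIntegrable_of_Icc hab)
    x y

theorem Matrix.posDef_intervalIntegral (hab : a < b) (hM : ContinuousOn M (Icc a b))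
    (hpos : ∀ t ∈ Icc a b, (M t).PosDef) : (of fun i j => ∫ t in a..b, M t i j).PosDef := by
  refine .of_dotProduct_mulVec_pos ?_ fun x hx => ?_
  · ext i j
    refine intervalIntegral.integral_congr fun t ht => ?_
    exact (hpos t (uIcc_of_le hab.le ▸ ht)).isHermitian.apply i j
  · rw [star_trivial, hM.dotProduct_mulVec_intervalIntegral hab.le]
    refine intervalIntegral.intervalIntegral_pos_of_pos_on
      (hM.intervalIntegrable_dotProduct_mulVec hab.le x x) (fun t ht => ?_) hab
    simpa using (hpos t (Ioo_subset_Icc_self ht)).dotProduct_mulVec_pos hx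

end IntervalIntegral

theorem jensen_inverse_integral (n : ℕ) (T : ℝ) (hT : 0 < T)
    (Sig : ℝ → Matrix (Fin n) (Fin n) ℝ)
    (hcont : ∀ i j, ContinuousOn (fun t => Sig t i j) (Set.Icc 0 T))
    (hpos : ∀ t ∈ Set.Icc (0:ℝ) T, (Sig t).PosDef) :
    ((T⁻¹ • (Matrix.of fun i j => ∫ t in (0:ℝ)..T, (Sig t)⁻¹ i j))
      - (T⁻¹ • (Matrix.of fun i j => ∫ t in (0:ℝ)..T, Sig t i j))⁻¹).PosSemidef := by
  have hSig : ContinuousOn Sig (Icc 0 T) := continuousOn_pi.2 fun i => continuousOn_pi.2 (hcont i)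
  have hSigInv : ContinuousOn (fun t => (Sig t)⁻¹) (Icc 0 T) :=
    hSig.matrix_inv fun t ht => (hpos t ht).det_pos.ne'
  have hT' : 0 < T⁻¹ := inv_pos.2 hT
  refine posSemidef_sub_inv_of_forall_le ((posDef_intervalIntegral hT hSig hpos).smul hT')
    ((posDef_intervalIntegral hT hSigInv fun t ht => (hpos t ht).inv).smul hT').isHermitian
    fun x z => ?_
  have hq := hSig.intervalIntegrable_dotProduct_mulVec hT.le z z
  have hmono := intervalIntegral.integral_mono_on hT.le (intervalIntegrable_const.sub hq)
    (hSigInv.intervalIntegrable_dotProduct_mulVec hT.le x x)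
    fun t ht => (hpos t ht).two_mul_dotProduct_sub_le x z
  rw [intervalIntegral.integral_sub intervalIntegrable_const hq, intervalIntegral.integral_const,
    sub_zero, smul_eq_mul] at hmono
  simp only [smul_mulVec, dotProduct_smul, smul_eq_mul,
    hSig.dotProduct_mulVec_intervalIntegral hT.le, hSigInv.dotProduct_mulVec_intervalIntegral hT.le]
  calc 2 * (z ⬝ᵥ x) - T⁻¹ * ∫ t in (0:ℝ)..T, z ⬝ᵥ Sig t *ᵥ z
      = T⁻¹ * (T * (2 * (z ⬝ᵥ x)) - ∫ t in (0:ℝ)..T, z ⬝ᵥ Sig t *ᵥ z) := by field_simp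
    _ ≤ T⁻¹ * ∫ t in (0:ℝ)..T, x ⬝ᵥ (Sig t)⁻¹ *ᵥ x := by gcongr
end

section
/- Jensen's inequality for the quadratic matrix map under integration: if Q : [0,T] → Sⁿ is continuous with symmetric values and W is symmetric positive semidefinite, then ((1/T)∫₀ᵀ Q(t) dt) W ((1/T)∫₀ᵀ Q(t) dt) ⪯ (1/T)∫₀ᵀ Q(t) W Q(t) dt. -/
/-!
Fix a vector `x`. Since `Q t` is symmetric, `xᵀ (Q t W Q t) x = (Q t x)ᵀ W (Q t x)`, and the
quadratic form `y ↦ yᵀ W y` is convex because `W ⪰ 0`. The quadratic form of the claimed matrix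
at `x` is therefore the gap in Jensen's inequality for this convex function and the vector-valued
map `t ↦ Q t x`, averaged over `[0, T]`.
-/

open Matrix MeasureTheory

namespace Matrix

variable {ι : Type*} [Fintype ι]

theorem IsSymm.mul_mul {R : Type*} [CommSemiring R] {A B : Matrix ι ι R} (hA : A.IsSymm)
    (hB : B.IsSymm) : (A * B * A).IsSymm := by
  simp only [IsSymm, transpose_mul, hA.eq, hB.eq, Matrix.mul_assoc]

theorem IsSymm.dotProduct_mulVec_comm {R : Type*} [CommSemiring R] {W : Matrix ι ι R}
    (hW : W.IsSymm) (u v : ι → R) : u ⬝ᵥ W *ᵥ v = v ⬝ᵥ W *ᵥ u := by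
  rw [dotProduct_mulVec, ← mulVec_transpose, hW.eq, dotProduct_comm]

theorem IsSymm.dotProduct_mul_mul_mulVec {R : Type*} [CommSemiring R] {A : Matrix ι ι R}
    (hA : A.IsSymm) (W : Matrix ι ι R) (x : ι → R) :
    x ⬝ᵥ (A * W * A) *ᵥ x = (A *ᵥ x) ⬝ᵥ W *ᵥ (A *ᵥ x) := by
  rw [← mulVec_mulVec, ← mulVec_mulVec, dotProduct_mulVec, ← mulVec_transpose, hA.eq]

theorem PosSemidef.convexOn_dotProduct_mulVec {W : Matrix ι ι ℝ} (hW : W.PosSemidef) :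
    ConvexOn ℝ Set.univ fun y : ι → ℝ => y ⬝ᵥ W *ᵥ y := by
  refine ⟨convex_univ, fun x _ y _ a b ha hb hab => ?_⟩
  have hWs : W.IsSymm := isHermitian_iff_isSymm.1 hW.isHermitian
  have defect : a • (x ⬝ᵥ W *ᵥ x) + b • (y ⬝ᵥ W *ᵥ y)
      - (a • x + b • y) ⬝ᵥ W *ᵥ (a • x + b • y) = a * b * ((x - y) ⬝ᵥ W *ᵥ (x - y)) := by
    simp only [mulVec_add, mulVec_smul, mulVec_sub, add_dotProduct, dotProduct_add,
      sub_dotProduct, dotProduct_sub, smul_dotProduct, dotProduct_smul, smul_eq_mul,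
      hWs.dotProduct_mulVec_comm y x]
    obtain rfl : b = 1 - a := by linarith
    ring
  have hxy := hW.dotProduct_mulVec_nonneg (x - y)
  rw [star_trivial] at hxy
  linarith [mul_nonneg (mul_nonneg ha hb) hxy]

variable {α : Type*} [MeasurableSpace α] {μ : Measure α}

theorem integrable_dotProduct {u : α → ι → ℝ} (hu : ∀ i, Integrable (fun t => u t i) μ)
    (x : ι → ℝ) : Integrable (fun t => x ⬝ᵥ u t) μ :=
  integrable_finsetSum _ fun i _ => (hu i).const_mul (x i)

theorem dotProduct_integral {u : α → ι → ℝ} (hu : ∀ i, Integrable (fun t => u t i) μ)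
    (x : ι → ℝ) : x ⬝ᵥ ∫ t, u t ∂μ = ∫ t, x ⬝ᵥ u t ∂μ := by
  simp only [dotProduct, eval_integral hu]
  rw [integral_finsetSum _ fun i _ => (hu i).const_mul (x i)]
  simp only [integral_const_mul]

section Rectangular

variable {m n : Type*}

theorem isSymm_integral {F : α → Matrix m m ℝ} (hF : ∀ᵐ t ∂μ, (F t).IsSymm) :
    (of fun i j => ∫ t, F t i j ∂μ).IsSymm :=
  IsSymm.ext fun i j => integral_congr_ae (hF.mono fun _ ht => ht.apply i j)

variable [Fintype n]

theorem integrable_mulVec_apply {F : α → Matrix m n ℝ}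
    (hF : ∀ i j, Integrable (fun t => F t i j) μ) (x : n → ℝ) (i : m) :
    Integrable (fun t => (F t *ᵥ x) i) μ :=
  integrable_finsetSum _ fun j _ => (hF i j).mul_const (x j)

theorem mulVec_integral [Fintype m] {F : α → Matrix m n ℝ}
    (hF : ∀ i j, Integrable (fun t => F t i j) μ) (x : n → ℝ) :
    (of fun i j => ∫ t, F t i j ∂μ) *ᵥ x = ∫ t, F t *ᵥ x ∂μ := by
  ext i
  rw [eval_integral (integrable_mulVec_apply hF x)]
  simp only [mulVec, dotProduct, of_apply]
  rw [integral_finsetSum _ fun j _ => (hF i j).mul_const (x j)]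
  simp only [integral_mul_const]

end Rectangular

theorem PosSemidef.integral_mul_mul_sub [IsProbabilityMeasure μ] {F : α → Matrix ι ι ℝ}
    {W : Matrix ι ι ℝ} (hW : W.PosSemidef) (hF : ∀ᵐ t ∂μ, (F t).IsSymm)
    (hFi : ∀ i j, Integrable (fun t => F t i j) μ)
    (hFWF : ∀ i j, Integrable (fun t => (F t * W * F t) i j) μ) :
    ((of fun i j => ∫ t, (F t * W * F t) i j ∂μ)
      - (of fun i j => ∫ t, F t i j ∂μ) * W * (of fun i j => ∫ t, F t i j ∂μ)).PosSemidef := by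
  have hWs : W.IsSymm := isHermitian_iff_isSymm.1 hW.isHermitian
  have hFWFs : ∀ᵐ t ∂μ, (F t * W * F t).IsSymm := hF.mono fun _ ht => ht.mul_mul hWs
  have hM := isSymm_integral hF
  refine posSemidef_iff_dotProduct_mulVec.2
    ⟨isHermitian_iff_isSymm.2 ((isSymm_integral hFWFs).sub (hM.mul_mul hWs)), fun x => ?_⟩
  have hform : (fun t => x ⬝ᵥ (F t * W * F t) *ᵥ x)
      =ᵐ[μ] fun t => (F t *ᵥ x) ⬝ᵥ W *ᵥ (F t *ᵥ x) :=
    hF.mono fun t ht => ht.dotProduct_mul_mul_mulVec W x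
  have hFWFx := integrable_mulVec_apply hFWF x
  have jensen := hW.convexOn_dotProduct_mulVec.map_integral_le (by fun_prop) isClosed_univ
    (by simp) (Integrable.of_eval (integrable_mulVec_apply hFi x))
    ((integrable_dotProduct hFWFx x).congr hform)
  rwa [star_trivial, sub_mulVec, dotProduct_sub, sub_nonneg, hM.dotProduct_mul_mul_mulVec,
    mulVec_integral hFi, mulVec_integral hFWF, dotProduct_integral hFWFx,
    integral_congr_ae hform]

theorem PosSemidef.average_mul_mul_sub [IsFiniteMeasure μ] [NeZero μ] {F : α → Matrix ι ι ℝ}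
    {W : Matrix ι ι ℝ} (hW : W.PosSemidef) (hF : ∀ᵐ t ∂μ, (F t).IsSymm)
    (hFi : ∀ i j, Integrable (fun t => F t i j) μ)
    (hFWF : ∀ i j, Integrable (fun t => (F t * W * F t) i j) μ) :
    ((of fun i j => ⨍ t, (F t * W * F t) i j ∂μ)
      - (of fun i j => ⨍ t, F t i j ∂μ) * W * (of fun i j => ⨍ t, F t i j ∂μ)).PosSemidef :=
  have hc : (μ Set.univ)⁻¹ ≠ ⊤ := ENNReal.inv_ne_top.2 (NeZero.ne _)
  hW.integral_mul_mul_sub (Measure.ae_smul_measure hF _)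
    (fun i j => (hFi i j).smul_measure hc) (fun i j => (hFWF i j).smul_measure hc)

theorem inv_smul_of_intervalIntegral {m n : Type*} (F : ℝ → Matrix m n ℝ) (a b : ℝ) :
    (b - a)⁻¹ • (of fun i j => ∫ t in a..b, F t i j) = of fun i j => ⨍ t in a..b, F t i j := by
  ext i j
  simp only [smul_apply, of_apply, interval_average_eq, smul_eq_mul]

end Matrix

theorem jensen_quadratic_integral (n : ℕ) (T : ℝ) (hT : 0 < T)
    (Q : ℝ → Matrix (Fin n) (Fin n) ℝ) (W : Matrix (Fin n) (Fin n) ℝ)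
    (hcont : ∀ i j, ContinuousOn (fun t => Q t i j) (Set.Icc 0 T))
    (hsym : ∀ t ∈ Set.Icc (0:ℝ) T, (Q t).IsSymm)
    (hW : W.PosSemidef) :
    ((T⁻¹ • (Matrix.of fun i j => ∫ t in (0:ℝ)..T, (Q t * W * Q t) i j))
      - (T⁻¹ • (Matrix.of fun i j => ∫ t in (0:ℝ)..T, Q t i j)) * W *
        (T⁻¹ • (Matrix.of fun i j => ∫ t in (0:ℝ)..T, Q t i j))).PosSemidef := by
  have hIoc : Set.uIoc 0 T = Set.Ioc 0 T := Set.uIoc_of_le hT.le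
  have : IsFiniteMeasure (volume.restrict (Set.uIoc 0 T)) := by rw [hIoc]; infer_instance
  have : NeZero (volume.restrict (Set.uIoc 0 T)) := ⟨by simp [hIoc, hT]⟩
  have hIcc : Set.uIoc 0 T ⊆ Set.Icc 0 T := hIoc ▸ Set.Ioc_subset_Icc_self
  have hint {f : ℝ → ℝ} (hf : ContinuousOn f (Set.Icc 0 T)) :
      Integrable f (volume.restrict (Set.uIoc 0 T)) :=
    hf.integrableOn_Icc.mono_set hIcc
  have hQWQ (i j) : ContinuousOn (fun t => (Q t * W * Q t) i j) (Set.Icc 0 T) := by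
    simp only [mul_apply]
    fun_prop
  have havg (G : ℝ → Matrix (Fin n) (Fin n) ℝ) := by
    simpa only [sub_zero] using inv_smul_of_intervalIntegral G 0 T
  rw [havg, havg]
  exact hW.average_mul_mul_sub
    (ae_restrict_of_forall_mem measurableSet_uIoc fun t ht => hsym t (hIcc ht))
    (fun i j => hint (hcont i j)) (fun i j => hint (hQWQ i j))
end

section
/- For A < 0, W > 0, V > 0, C ≠ 0, the equilibrium x_e = -W/(2A) of the Lyapunov equation 2Ax + W = 0 is strictly positive and satisfies x_e > x₂, where x₂ = (A + √(A² + C²W/V))/(C²/V) is the positive root of 2Ax + W - (C²/V)x² = 0. -/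
/-
With `k = C²/V > 0`, the number `x₂` is the larger root of `k x² - 2A x - W`. A point `x` lies
strictly beyond that root as soon as it lies beyond the vertex `A/k` and the quadratic is positive
there. At the equilibrium `x_e` the linear part `2A x_e + W` vanishes, so the quadratic equals
`k x_e² > 0`, and `x_e > 0 > A/k`.
-/

theorem quadratic_root_lt_of_pos {a k w x : ℝ} (hk : 0 < k) (hvertex : a < k * x)
    (hpos : w < k * x ^ 2 - 2 * a * x) :
    (a + √(a ^ 2 + k * w)) / k < x := by
  rw [div_lt_iff₀ hk, ← lt_sub_iff_add_lt', Real.sqrt_lt' (by linarith)]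
  nlinarith

theorem mul_neg_div_two_mul_add_self {a : ℝ} (ha : a ≠ 0) (w : ℝ) :
    2 * a * (-w / (2 * a)) + w = 0 := by
  field_simp
  ring

theorem lyapunov_equilibrium_above_x2 (A W C V : ℝ) (hA : A < 0) (hW : 0 < W)
    (hV : 0 < V) (hC : C ≠ 0) :
    let xe := -W / (2*A)
    let x₂ := (A + Real.sqrt (A^2 + C^2 * W / V)) / (C^2 / V)
    2*A*xe + W = 0 ∧ 0 < xe ∧ x₂ < xe := by
  intro xe x₂
  have hequil : 2 * A * xe + W = 0 := mul_neg_div_two_mul_add_self hA.ne W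
  have hxe : 0 < xe := div_pos_of_neg_of_neg (by linarith) (by linarith)
  have hk : 0 < C ^ 2 / V := by positivity
  refine ⟨hequil, hxe, ?_⟩
  change (A + √(A ^ 2 + C ^ 2 * W / V)) / (C ^ 2 / V) < xe
  rw [mul_div_right_comm]
  apply quadratic_root_lt_of_pos hk
  · linarith [mul_pos hk hxe]
  · linarith [mul_pos hk (pow_pos hxe 2)]
end

section
/- Let A, W, C, V, T, κ be reals with T > 0, W > 0, V > 0, C ≠ 0, and let x₂ = (A + √(A² + C²W/V))/(C²/V). Then the function Σ ↦ -κ + (C²/(2V)) · TΣ³/(AΣ + W) is strictly increasing on the interval (x₂, -W/(2A)) when A < 0, and on (x₂, ∞) when A ≥ 0. -/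
/-!
The derivative of `x ↦ x³/(a x + b)` is `x²(2a x + 3b)/(a x + b)²`, which is positive wherever
`x > 0`, `a x + b > 0` and `2a x + 3b > 0`. The root `x₂` is positive because
`√(A² + C²W/V) > |A|`, and on each interval `2A Σ + W > 0`, which gives the two linear conditions.
-/

lemma hasDerivAt_cube_div_affine {a b x : ℝ} (hx : a * x + b ≠ 0) :
    HasDerivAt (fun y => y ^ 3 / (a * y + b)) (x ^ 2 * (2 * a * x + 3 * b) / (a * x + b) ^ 2) x := by
  have hnum : HasDerivAt (fun y : ℝ => y ^ 3) (3 * x ^ 2) x := by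
    simpa using hasDerivAt_pow 3 x
  have hden : HasDerivAt (fun y : ℝ => a * y + b) a x := by
    simpa using ((hasDerivAt_id x).const_mul a).add_const b
  exact (hnum.div hden hx).congr_deriv (by ring)

lemma strictMonoOn_cube_div_affine {a b : ℝ} {s : Set ℝ} (hs : Convex ℝ s)
    (hpos : ∀ x ∈ s, 0 < x ∧ 0 < a * x + b ∧ 0 < 2 * a * x + 3 * b) :
    StrictMonoOn (fun x => x ^ 3 / (a * x + b)) s := by
  refine strictMonoOn_of_deriv_pos hs ?_ fun x hx => ?_
  · exact ContinuousOn.div (by fun_prop) (by fun_prop) fun x hx => (hpos x hx).2.1.ne'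
  · obtain ⟨hx0, hden, hlin⟩ := hpos x (interior_subset hx)
    rw [(hasDerivAt_cube_div_affine hden.ne').deriv]
    positivity

lemma add_sqrt_sq_add_pos {a d : ℝ} (hd : 0 < d) : 0 < a + √(a ^ 2 + d) := by
  have h : |a| < √(a ^ 2 + d) := by
    rw [← Real.sqrt_sq_eq_abs]
    exact Real.sqrt_lt_sqrt (sq_nonneg a) (lt_add_of_pos_right _ hd)
  linarith [neg_abs_le a]

lemma mul_add_pos_of_two_mul_add_pos {a b x : ℝ} (hb : 0 < b) (h : 0 < 2 * a * x + b) :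
    0 < a * x + b := by
  rcases le_or_gt 0 (a * x) with hax | hax <;> linarith

theorem whittle_index_case2_monotone (A W C V T κ : ℝ) (hT : 0 < T) (hW : 0 < W)
    (hV : 0 < V) (hC : C ≠ 0) :
    let x₂ := (A + Real.sqrt (A^2 + C^2 * W / V)) / (C^2 / V)
    let f := fun Sig : ℝ => -κ + (C^2 / (2*V)) * (T * Sig^3 / (A * Sig + W))
    (A < 0 → StrictMonoOn f (Set.Ioo x₂ (-W/(2*A)))) ∧
    (0 ≤ A → StrictMonoOn f (Set.Ioi x₂)) := by
  intro x₂ f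
  have hx₂ : 0 < x₂ := div_pos (add_sqrt_sq_add_pos (by positivity)) (by positivity)
  have hf : ∀ s : Set ℝ, Convex ℝ s → (∀ x ∈ s, 0 < x ∧ 0 < 2 * A * x + W) → StrictMonoOn f s := by
    intro s hs hmem x hx y hy hxy
    have hcube := strictMonoOn_cube_div_affine (a := A) (b := W) hs (fun z hz =>
      have ⟨hz0, hz⟩ := hmem z hz
      ⟨hz0, mul_add_pos_of_two_mul_add_pos hW hz, by linarith⟩) hx hy hxy
    simp only [f, mul_div_assoc]
    gcongr
  refine ⟨fun hA => hf _ (convex_Ioo _ _) fun x hx => ⟨hx₂.trans hx.1, ?_⟩,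
    fun hA => hf _ (convex_Ioi _) fun x hx => ⟨hx₂.trans hx, by nlinarith [hx₂.trans hx]⟩⟩
  have h := (lt_div_iff_of_neg (by linarith : 2 * A < 0)).1 hx.2
  linarith
end

section
/- Let A, W, C, V be reals with W > 0, V > 0, C ≠ 0, and let x₂ be the positive root of 2Ax + W - (C²/V)x² = 0. If Σ(t) solves Σ' = 2AΣ + W - (C²/V)Σ², Σ(0) = Σ₀ > 0, then Σ(t) → x₂ as t → ∞. -/
/-!
The right-hand side factors as `-b (x - x₁) (x - x₂)` with `b = C²/V` and roots `x₁ < 0 < x₂`.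
Then `Σ - x₁` solves a linear equation, so it keeps the sign of `Σ₀ - x₁ > 0`, and the ratio
`y = (Σ - x₂) / (Σ - x₁)` solves `y' = -b (x₂ - x₁) y`. Hence `y` decays exponentially and
`Σ = (x₂ - x₁ y) / (1 - y)` tends to `x₂`.
-/

open Real Filter Set Topology

theorem eq_exp_integral_smul_of_hasDerivAt {E : Type*} [NormedAddCommGroup E] [NormedSpace ℝ E]
    {k : ℝ → ℝ} {u : ℝ → E} {a t : ℝ} (hk : ContinuousOn k (Ici a))
    (hu : ∀ x ∈ Ici a, HasDerivAt u (k x • u x) x) (ht : a ≤ t) :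
    u t = exp (∫ s in a..t, k s) • u a := by
  set K : ℝ → ℝ := fun x => ∫ s in a..x, k s
  have hkInt : IntervalIntegrable k MeasureTheory.volume a t :=
    (hk.mono (by rw [uIcc_of_le ht]; exact Icc_subset_Ici_self)).intervalIntegrable
  have hK : ∀ x ∈ Ici a, HasDerivWithinAt K (k x) (Ici x) x := fun x hx =>
    intervalIntegral.integral_hasDerivWithinAt_right
      ((hk.mono (by rw [uIcc_of_le hx]; exact Icc_subset_Ici_self)).intervalIntegrable)
      ((hk.mono (Ioi_subset_Ici hx)).stronglyMeasurableAtFilter_nhdsWithin measurableSet_Ioi x)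
      ((hk x hx).mono (Ioi_subset_Ici hx))
  set F : ℝ → E := fun x => exp (-K x) • u x
  have hF : ∀ x ∈ Icc a t, F x = F a := by
    refine constant_of_has_deriv_right_zero ?_ fun x hx => ?_
    · refine (((intervalIntegral.continuousOn_primitive_interval' hkInt left_mem_uIcc).neg.rexp).smul
        fun x hx => (hu x ?_).continuousAt.continuousWithinAt).mono (by rw [uIcc_of_le ht])
      exact (mem_uIcc.1 hx).elim (·.1) fun h => ht.trans h.1
    · have : HasDerivWithinAt F (exp (-K x) • (k x • u x) + (exp (-K x) * -k x) • u x) (Ici x) x :=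
        ((hK x hx.1).neg.exp).smul (hu x hx.1).hasDerivWithinAt
      rwa [smul_smul, ← add_smul, mul_neg, add_neg_cancel, zero_smul] at this
  have := hF t ⟨ht, le_rfl⟩
  simp only [F, K, intervalIntegral.integral_same, neg_zero, exp_zero, one_smul] at this
  rw [← this, smul_smul, ← exp_add]
  simp

theorem lt_of_hasDerivAt_mul_sub_mul_sub {c r₁ r₂ a t : ℝ} {u : ℝ → ℝ}
    (hu : ∀ x ∈ Ici a, HasDerivAt u (c * (u x - r₁) * (u x - r₂)) x) (ha : r₁ < u a)
    (ht : a ≤ t) : r₁ < u t := by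
  have hcont : ContinuousOn u (Ici a) := fun x hx => (hu x hx).continuousAt.continuousWithinAt
  have hlin : ∀ x ∈ Ici a, HasDerivAt (fun y => u y - r₁) ((c * (u x - r₂)) • (u x - r₁)) x :=
    fun x hx => by simpa only [smul_eq_mul, mul_right_comm] using (hu x hx).sub_const r₁
  have := eq_exp_integral_smul_of_hasDerivAt ((hcont.sub continuousOn_const).const_smul c) hlin ht
  have : 0 < u t - r₁ := by rw [this]; exact mul_pos (exp_pos _) (sub_pos.2 ha)
  linarith

theorem tendsto_of_hasDerivAt_neg_mul_sub_mul_sub {b r₁ r₂ : ℝ} {u : ℝ → ℝ} (hb : 0 < b)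
    (hr : r₁ < r₂) (h0 : r₁ < u 0)
    (hu : ∀ t ∈ Ici 0, HasDerivAt u (-b * (u t - r₁) * (u t - r₂)) t) :
    Tendsto u atTop (𝓝 r₂) := by
  have hlow : ∀ t ∈ Ici 0, u t - r₁ ≠ 0 := fun t ht =>
    (sub_pos.2 (lt_of_hasDerivAt_mul_sub_mul_sub hu h0 ht)).ne'
  set y : ℝ → ℝ := fun t => (u t - r₂) / (u t - r₁)
  set l := b * (r₂ - r₁)
  have hy : ∀ t ∈ Ici 0, HasDerivAt y (-l * y t) t := fun t ht => by
    refine (((hu t ht).sub_const r₂).div ((hu t ht).sub_const r₁) (hlow t ht)).congr_deriv ?_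
    have := hlow t ht
    simp only [y, l]
    field_simp
    ring
  have hy_eq : ∀ t ∈ Ici 0, y t = exp (-(l * t)) * y 0 := fun t ht => by
    simpa [mul_comm] using eq_exp_integral_smul_of_hasDerivAt continuousOn_const hy ht
  have hy_lim : Tendsto y atTop (𝓝 0) := by
    have := (tendsto_exp_neg_atTop_nhds_zero.comp
      (tendsto_id.const_mul_atTop (mul_pos hb (sub_pos.2 hr)))).mul_const (y 0)
    rw [zero_mul] at this
    exact this.congr' (eventually_ge_atTop 0 |>.mono fun t ht => (hy_eq t ht).symm)
  have hu_eq : ∀ t ∈ Ici 0, u t = (r₂ - r₁ * y t) / (1 - y t) := fun t ht => by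
    have hyu : y t * (u t - r₁) = u t - r₂ := div_mul_cancel₀ _ (hlow t ht)
    have hy1 : 1 - y t ≠ 0 := fun h => hr.ne (by linear_combination -(u t - r₁) * h - hyu)
    rw [eq_div_iff hy1]
    linear_combination -hyu
  have hlim : Tendsto (fun t => (r₂ - r₁ * y t) / (1 - y t)) atTop (𝓝 r₂) := by
    have := ((tendsto_const_nhds (x := r₂)).sub (hy_lim.const_mul r₁)).div
      ((tendsto_const_nhds (x := (1 : ℝ))).sub hy_lim) (by norm_num)
    rwa [mul_zero, sub_zero, sub_zero, div_one] at this
  exact hlim.congr' (eventually_ge_atTop 0 |>.mono fun t ht => (hu_eq t ht).symm)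

theorem scalar_riccati_convergence (A W C V Sig0 : ℝ) (hW : 0 < W) (hV : 0 < V)
    (hC : C ≠ 0) (hSig0 : 0 < Sig0) (Sig : ℝ → ℝ) (h0 : Sig 0 = Sig0)
    (hode : ∀ t, 0 ≤ t → HasDerivAt Sig (2*A*Sig t + W - (C^2/V) * (Sig t)^2) t) :
    Filter.Tendsto Sig Filter.atTop
      (nhds ((A + Real.sqrt (A^2 + C^2 * W / V)) / (C^2 / V))) := by
  set b := C ^ 2 / V
  set s := √(A ^ 2 + C ^ 2 * W / V)
  have hb : 0 < b := by positivity
  have hs : s ^ 2 = A ^ 2 + b * W := by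
    rw [sq_sqrt (by positivity)]; ring
  have hAs : |A| < s := by
    have : 0 < C ^ 2 * W / V := by positivity
    rw [lt_sqrt (abs_nonneg A), sq_abs]; linarith
  refine tendsto_of_hasDerivAt_neg_mul_sub_mul_sub (r₁ := (A - s) / b) hb ?_ ?_ fun t ht => ?_
  · exact div_lt_div_of_pos_right (by linarith [abs_nonneg A]) hb
  · rw [h0]
    exact (div_neg_of_neg_of_pos (by linarith [le_abs_self A]) hb).trans hSig0
  · convert hode t ht using 1
    field_simp
    linear_combination hs
end

section
/- The set of n×n doubly substochastic matrices is the convex hull of the set of n×n matrices with entries in {0,1} having at most one 1 in each row and at most one 1 in each column (Mirsky's theorem). -/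
/-!
A doubly substochastic matrix `P` is the top-left block of the doubly stochastic matrix
`[[P, 1 - diag (row sums of P)], [1 - diag (column sums of P), Pᵀ]]`. By Birkhoff's theorem the
latter is a convex combination of permutation matrices, and taking the top-left block is linear,
so `P` is a convex combination of top-left blocks of permutation matrices, which are
subpermutation matrices. The other inclusion is convexity of the doubly substochastic matrices.
-/

open Finset Function

namespace Matrix

variable {R n m : Type*} [Fintype n] [Fintype m]

section Defs

variable (R n) [AddCommMonoid R] [One R] [LE R]

def doublySubstochastic : Set (Matrix n n R) :=
  {P | (∀ i j, 0 ≤ P i j) ∧ (∀ i, ∑ j, P i j ≤ 1) ∧ (∀ j, ∑ i, P i j ≤ 1)}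

def subpermutation : Set (Matrix n n R) :=
  {P | (∀ i j, P i j = 0 ∨ P i j = 1) ∧
    (∀ i, ∑ j, P i j ≤ 1) ∧ (∀ j, ∑ i, P i j ≤ 1)}

end Defs

section OrderedSemiring

variable [Semiring R] [PartialOrder R] [IsOrderedRing R]

lemma subpermutation_subset_doublySubstochastic :
    subpermutation R n ⊆ doublySubstochastic R n := by
  rintro P ⟨h01, hrow, hcol⟩
  exact ⟨fun i j ↦ (h01 i j).elim (·.ge) (fun h ↦ h ▸ zero_le_one), hrow, hcol⟩

lemma convex_doublySubstochastic : Convex R (doublySubstochastic R n) := by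
  rintro x ⟨hx0, hxr, hxc⟩ y ⟨hy0, hyr, hyc⟩ a b ha hb hab
  refine ⟨fun i j ↦ ?_, fun i ↦ ?_, fun j ↦ ?_⟩
  · simp only [add_apply, smul_apply, smul_eq_mul]
    exact add_nonneg (mul_nonneg ha (hx0 i j)) (mul_nonneg hb (hy0 i j))
  · simp only [add_apply, smul_apply, smul_eq_mul, sum_add_distrib, ← mul_sum]
    calc a * ∑ j, x i j + b * ∑ j, y i j ≤ a * 1 + b * 1 := by gcongr <;> simp [hxr, hyr]
      _ = 1 := by rw [mul_one, mul_one, hab]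
  · simp only [add_apply, smul_apply, smul_eq_mul, sum_add_distrib, ← mul_sum]
    calc a * ∑ i, x i j + b * ∑ i, y i j ≤ a * 1 + b * 1 := by gcongr <;> simp [hxc, hyc]
      _ = 1 := by rw [mul_one, mul_one, hab]

variable [DecidableEq m]

lemma submatrix_mem_doublySubstochastic {M : Matrix m m R} (hM : M ∈ doublyStochastic R m)
    {f : n → m} (hf : Injective f) : M.submatrix f f ∈ doublySubstochastic R n := by
  have sum_le (g : m → R) (hg : ∀ k, 0 ≤ g k) : ∑ i, g (f i) ≤ ∑ k, g k :=
    (sum_map univ ⟨f, hf⟩ g).symm.trans_le (sum_le_univ_sum_of_nonneg hg)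
  refine ⟨fun i j ↦ hM.1 _ _, fun i ↦ ?_, fun j ↦ ?_⟩
  · simpa [sum_row_of_mem_doublyStochastic hM] using sum_le (M (f i)) (hM.1 _)
  · simpa [sum_col_of_mem_doublyStochastic hM] using sum_le (M · (f j)) (hM.1 · _)

lemma submatrix_permMatrix_mem_subpermutation (σ : Equiv.Perm m) {f : n → m}
    (hf : Injective f) : (σ.permMatrix R).submatrix f f ∈ subpermutation R n := by
  obtain ⟨-, hrow, hcol⟩ :=
    submatrix_mem_doublySubstochastic (permMatrix_mem_doublyStochastic (R := R)) hf
  refine ⟨fun i j ↦ ?_, hrow, hcol⟩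
  simp only [submatrix_apply, PEquiv.toMatrix_apply]
  split_ifs <;> simp

end OrderedSemiring

section Dilation

variable [Ring R] [DecidableEq n]

def substochasticDilation (P : Matrix n n R) : Matrix (n ⊕ n) (n ⊕ n) R :=
  fromBlocks P (diagonal fun i ↦ 1 - ∑ j, P i j) (diagonal fun j ↦ 1 - ∑ i, P i j) Pᵀ

lemma submatrix_inl_substochasticDilation (P : Matrix n n R) :
    (substochasticDilation P).submatrix Sum.inl Sum.inl = P :=
  toBlocks_fromBlocks₁₁ _ _ _ _

variable [PartialOrder R] [IsOrderedRing R]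

lemma substochasticDilation_mem_doublyStochastic {P : Matrix n n R}
    (hP : P ∈ doublySubstochastic R n) :
    substochasticDilation P ∈ doublyStochastic R (n ⊕ n) := by
  obtain ⟨hP0, hrow, hcol⟩ := hP
  rw [mem_doublyStochastic_iff_sum]
  refine ⟨?_, ?_, ?_⟩
  · rintro (i | i) (j | j) <;>
      simp only [substochasticDilation, fromBlocks_apply₁₁, fromBlocks_apply₁₂,
        fromBlocks_apply₂₁, fromBlocks_apply₂₂, diagonal_apply, transpose_apply]
    · exact hP0 i j
    · split_ifs <;> simp [hrow]
    · split_ifs <;> simp [hcol]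
    · exact hP0 j i
  · rintro (i | i) <;> simp [substochasticDilation, Fintype.sum_sum_type, diagonal_apply]
  · rintro (j | j) <;> simp [substochasticDilation, Fintype.sum_sum_type, diagonal_apply]

end Dilation

theorem doublySubstochastic_eq_convexHull_subpermutation [Field R] [LinearOrder R]
    [IsStrictOrderedRing R] [DecidableEq n] :
    doublySubstochastic R n = convexHull R (subpermutation R n) := by
  refine subset_antisymm (fun P hP ↦ ?_)
    (convexHull_min subpermutation_subset_doublySubstochastic convex_doublySubstochastic)
  have hdilation := substochasticDilation_mem_doublyStochastic hP
  rw [← SetLike.mem_coe, doublyStochastic_eq_convexHull_permMatrix] at hdilation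
  have htopLeft :
      IsLinearMap R fun M : Matrix (n ⊕ n) (n ⊕ n) R ↦ M.submatrix Sum.inl Sum.inl :=
    ⟨fun _ _ ↦ rfl, fun _ _ ↦ rfl⟩
  have hP' : P ∈ (·.submatrix Sum.inl Sum.inl) ''
      convexHull R {σ.permMatrix R | σ : Equiv.Perm (n ⊕ n)} :=
    ⟨_, hdilation, submatrix_inl_substochasticDilation P⟩
  rw [htopLeft.image_convexHull] at hP'
  refine convexHull_mono ?_ hP'
  rintro _ ⟨_, ⟨σ, rfl⟩, rfl⟩
  exact submatrix_permMatrix_mem_subpermutation σ Sum.inl_injective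

end Matrix

open Matrix

theorem mirsky_substochastic_convex_hull (n : ℕ) :
    {P : Matrix (Fin n) (Fin n) ℝ |
        (∀ i j, 0 ≤ P i j) ∧ (∀ i, ∑ j, P i j ≤ 1) ∧ (∀ j, ∑ i, P i j ≤ 1)} =
      convexHull ℝ
        {P : Matrix (Fin n) (Fin n) ℝ |
          (∀ i j, P i j = 0 ∨ P i j = 1) ∧
          (∀ i, ∑ j, P i j ≤ 1) ∧ (∀ j, ∑ i, P i j ≤ 1)} :=
  doublySubstochastic_eq_convexHull_subpermutation
end
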